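/- Let G1 and G2 be finite graphs on the same number n of vertices. Form G_i' from G_i by adding a universal vertex u_i, a pendant leaf v_i attached to u_i, and then subdividing every edge once; let G' = G1' ⊔ G2' (disjoint union). If G' admits an involutive automorphism f with e ∩ f(e) = ∅ for every edge e, then G1 and G2 are isomorphic. -/

import Mathlib

/-!
For `n ≥ 2` the apices `u₁, u₂` are the only vertices of `G'` of degree `n + 1` (smaller `n` is
trivial). As `f` moves `u₁`, it swaps the apices, and since each `Gᵢ'` is connected, `f` exchanges
the two components, giving an isomorphism `G₁' ≃ G₂'` fixing the apex. It respects the bipartition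
into original and subdivision vertices, hence descends to `augment G₁ ≃ augment G₂` fixing the
apex; composed with the swap of the leaf and its image (which are twins) it restricts to
`G₁ ≃ G₂`.
-/

open SimpleGraph Finset

/-- `G` together with a new universal vertex `u = Sum.inr false` and a pendant leaf
`v = Sum.inr true` attached to `u`. -/
def augment {V : Type*} (G : SimpleGraph V) : SimpleGraph (V ⊕ Bool) :=
  SimpleGraph.fromRel fun a b =>
    match a, b with
    | Sum.inl x, Sum.inl y => G.Adj x y
    | Sum.inl _, Sum.inr b => b = false
    | Sum.inr _, Sum.inr _ => True
    | _, _ => False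

/-- The subdivision of `H`: every edge is replaced by a path of length 2 through a new
vertex indexed by that edge. -/
def subdiv {W : Type*} (H : SimpleGraph W) : SimpleGraph (W ⊕ H.edgeSet) :=
  SimpleGraph.fromRel fun a b =>
    match a, b with
    | Sum.inl w, Sum.inr e => w ∈ (e : Sym2 W)
    | _, _ => False

open Sum

namespace Equiv

variable {α β α' β' : Type*}

theorem exists_apply_inl_eq_inl (e : α ⊕ β ≃ α' ⊕ β') (he : ∀ x, (e x).isLeft = x.isLeft) :
    ∃ g : α ≃ α', ∀ a, e (inl a) = inl (g a) :=
  ⟨(sumIsLeft.symm.trans (e.subtypeEquiv fun x => by rw [he])).trans sumIsLeft,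
    fun a => by simp⟩

end Equiv

namespace SimpleGraph

variable {V W α β α' β' : Type*}

theorem Reachable.sum_isLeft_eq {G : SimpleGraph V} {H : SimpleGraph W} {x y : V ⊕ W}
    (h : (G ⊕g H).Reachable x y) : x.isLeft = y.isLeft := by
  rcases x with a | b <;> rcases y with c | d
  · rfl
  · exact absurd h (not_reachable_sum_inl_inr a d)
  · exact absurd h.symm (not_reachable_sum_inl_inr c b)
  · rfl

theorem Hom.isRight_apply_eq_isLeft {G : SimpleGraph V} {H : SimpleGraph W}
    {K : SimpleGraph α} {L : SimpleGraph β} (hG : G.Preconnected) (hH : H.Preconnected)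
    (f : G ⊕g H →g K ⊕g L) {a : V} {b : W} (ha : (f (inl a)).isRight) (hb : (f (inr b)).isLeft)
    (x : V ⊕ W) : (f x).isRight = x.isLeft := by
  rcases x with w | w
  · rw [isLeft_inl, ← ha, ← bnot_isLeft, ← bnot_isLeft]
    exact congrArg _ ((hG a w).map (f.comp Embedding.sumInl.toHom)).sum_isLeft_eq.symm
  · rw [isLeft_inr, ← bnot_isLeft, Bool.not_eq_false', ← hb]
    exact ((hH b w).map (f.comp Embedding.sumInr.toHom)).sum_isLeft_eq.symm

theorem Coloring.apply_eq_of_preconnected {G : SimpleGraph V} (hG : G.Preconnected)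
    (c c' : G.Coloring Bool) {a : V} (ha : c a = c' a) (v : V) : c v = c' v := by
  obtain ⟨p⟩ := hG a v
  induction p with
  | nil => exact ha
  | cons hadj _ ih =>
    refine ih ?_
    rw [Bool.eq_not_of_ne (c.valid hadj).symm, Bool.eq_not_of_ne (c'.valid hadj).symm, ha]

theorem sum_comap_inl (G : SimpleGraph V) (H : SimpleGraph W) : (G ⊕g H).comap inl = G := by
  ext; rfl

theorem Iso.exists_iso_comap_inl {K : SimpleGraph (α ⊕ β)} {K' : SimpleGraph (α' ⊕ β')}
    {G : SimpleGraph α} {G' : SimpleGraph α'} (hG : K.comap inl = G) (hG' : K'.comap inl = G')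
    (φ : K ≃g K') (hφ : ∀ x, (φ x).isLeft = x.isLeft) :
    ∃ ψ : G ≃g G', ∀ a, φ (inl a) = inl (ψ a) := by
  subst hG hG'
  obtain ⟨g, hg⟩ := φ.toEquiv.exists_apply_inl_eq_inl hφ
  exact ⟨⟨g, fun {a b} => by simp [comap_adj, ← hg, Iso.map_adj_iff]⟩, hg⟩

theorem Iso.ncard_neighborSet {G : SimpleGraph V} {G' : SimpleGraph W} (f : G ≃g G') (v : V) :
    (G'.neighborSet (f v)).ncard = (G.neighborSet v).ncard := by
  rw [← f.image_neighborSet, Set.ncard_image_of_injective _ f.injective]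

theorem ncard_neighborSet_sum_inl (G : SimpleGraph V) (H : SimpleGraph W) (v : V) :
    ((G ⊕g H).neighborSet (inl v)).ncard = (G.neighborSet v).ncard := by
  rw [neighborSet_sum_inl, Set.ncard_image_of_injective _ inl_injective]

theorem ncard_neighborSet_sum_inr (G : SimpleGraph V) (H : SimpleGraph W) (w : W) :
    ((G ⊕g H).neighborSet (inr w)).ncard = (H.neighborSet w).ncard := by
  rw [neighborSet_sum_inr, Set.ncard_image_of_injective _ inr_injective]

def Iso.swapOfAdjIff [DecidableEq V] {G : SimpleGraph V} {p q : V}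
    (h : ∀ z, G.Adj p z ↔ G.Adj q z) : G ≃g G where
  toEquiv := Equiv.swap p q
  map_rel_iff' {a b} := by
    have h' : ∀ z, G.Adj z p ↔ G.Adj z q := by simpa only [adj_comm] using h
    simp only [Equiv.swap_apply_def]
    split_ifs <;> subst_vars <;> simp_all

end SimpleGraph

section

variable {V W V₁ V₂ W₁ W₂ : Type*}

section Augment

variable (G : SimpleGraph V)

@[simp] theorem augment_adj_inl_inl (x y : V) : (augment G).Adj (inl x) (inl y) ↔ G.Adj x y := by
  simp only [augment, fromRel_adj, ne_eq, inl.injEq]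
  exact ⟨fun ⟨_, h⟩ => h.elim id .symm, fun h => ⟨h.ne, .inl h⟩⟩

@[simp] theorem augment_adj_inl_inr (x : V) (b : Bool) :
    (augment G).Adj (inl x) (inr b) ↔ b = false := by
  simp [augment, fromRel_adj]

@[simp] theorem augment_adj_inr_inl (x : V) (b : Bool) :
    (augment G).Adj (inr b) (inl x) ↔ b = false := by
  rw [adj_comm, augment_adj_inl_inr]

@[simp] theorem augment_adj_inr_inr (b c : Bool) : (augment G).Adj (inr b) (inr c) ↔ b ≠ c := by
  simp [augment, fromRel_adj]

theorem augment_adj_inr_true {w : V ⊕ Bool} : (augment G).Adj (inr true) w ↔ w = inr false := by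
  cases w <;> simp

theorem augment_comap_inl : (augment G).comap inl = G := by
  ext; simp

theorem augment_preconnected : (augment G).Preconnected := by
  have hu : ∀ w, (augment G).Reachable (inr false) w := by
    rintro (x | _ | _)
    · exact Adj.reachable (by simp)
    · rfl
    · exact Adj.reachable (by simp)
  exact fun w w' => (hu w).symm.trans (hu w')

theorem ncard_neighborSet_augment_inr_false [Fintype V] :
    ((augment G).neighborSet (inr false)).ncard = Fintype.card V + 1 := by
  have h : (augment G).neighborSet (inr false) = insert (inr true) (Set.range inl) := by
    ext (_ | _ | _) <;> simp
  rw [h, Set.ncard_insert_of_notMem (by simp), ← Set.image_univ,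
    Set.ncard_image_of_injective _ inl_injective, Set.ncard_univ, Nat.card_eq_fintype_card]

theorem ncard_neighborSet_augment_inr_true :
    ((augment G).neighborSet (inr true)).ncard = 1 := by
  have h : (augment G).neighborSet (inr true) = {inr false} := by
    ext; simp [augment_adj_inr_true]
  rw [h, Set.ncard_singleton]

theorem ncard_neighborSet_augment_inl_le [Fintype V] (x : V) :
    ((augment G).neighborSet (inl x)).ncard ≤ Fintype.card V := by
  have h : (augment G).neighborSet (inl x) ⊆ {inl x, inr true}ᶜ := by
    rintro w hw (rfl | rfl)
    · exact (augment G).irrefl hw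
    · simp at hw
  have := Set.ncard_le_ncard h
  rw [Set.ncard_compl, Set.ncard_pair (by simp), Nat.card_eq_fintype_card, Fintype.card_sum,
    Fintype.card_bool] at this
  omega

end Augment

section Subdiv

variable (H : SimpleGraph W)

@[simp] theorem subdiv_adj_inl_inr (w : W) (e : H.edgeSet) :
    (subdiv H).Adj (inl w) (inr e) ↔ w ∈ (e : Sym2 W) := by
  simp [subdiv, fromRel_adj]

@[simp] theorem subdiv_adj_inr_inl (w : W) (e : H.edgeSet) :
    (subdiv H).Adj (inr e) (inl w) ↔ w ∈ (e : Sym2 W) := by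
  rw [adj_comm, subdiv_adj_inl_inr]

@[simp] theorem subdiv_not_adj_inl_inl (w w' : W) : ¬ (subdiv H).Adj (inl w) (inl w') := by
  simp [subdiv, fromRel_adj]

@[simp] theorem subdiv_not_adj_inr_inr (e e' : H.edgeSet) : ¬ (subdiv H).Adj (inr e) (inr e') := by
  simp [subdiv, fromRel_adj]

def subdivColoring : (subdiv H).Coloring Bool :=
  Coloring.mk Sum.isLeft fun {a b} hab => by
    rcases a with _ | _ <;> rcases b with _ | _ <;> simp_all

theorem adj_iff_exists_subdiv_adj {x y : W} :
    H.Adj x y ↔ x ≠ y ∧ ∃ z, (subdiv H).Adj (inl x) z ∧ (subdiv H).Adj (inl y) z := by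
  refine ⟨fun h => ⟨h.ne, inr ⟨s(x, y), h⟩, by simp, by simp⟩, ?_⟩
  rintro ⟨hne, _ | ⟨e, he⟩, hx, hy⟩
  · simp at hx
  · rw [subdiv_adj_inl_inr] at hx hy
    rwa [← mem_edgeSet, ← (Sym2.mem_and_mem_iff hne).mp ⟨hx, hy⟩]

theorem subdiv_preconnected {H : SimpleGraph W} (hH : H.Preconnected) :
    (subdiv H).Preconnected := by
  have hstep : ∀ {x y}, H.Adj x y → (subdiv H).Reachable (inl x) (inl y) := fun h =>
    (Adj.reachable (v := inr ⟨s(_, _), h⟩) (by simp)).trans (Adj.reachable (by simp))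
  have hl : ∀ x y, (subdiv H).Reachable (inl x) (inl y) := fun x y => by
    rw [reachable_iff_reflTransGen]
    exact ((reachable_iff_reflTransGen x y).mp (hH x y)).lift' inl
      fun _ _ h => (reachable_iff_reflTransGen _ _).mp (hstep h)
  have hr : ∀ a, ∃ x, (subdiv H).Reachable (inl x) a := by
    rintro (x | ⟨e, he⟩)
    · exact ⟨x, .rfl⟩
    · induction e using Sym2.ind with
      | _ x y => exact ⟨x, Adj.reachable (by simp)⟩
  intro a b
  obtain ⟨x, hx⟩ := hr a
  obtain ⟨y, hy⟩ := hr b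
  exact hx.symm.trans ((hl x y).trans hy)

theorem ncard_neighborSet_subdiv_inl (w : W) :
    ((subdiv H).neighborSet (inl w)).ncard = (H.neighborSet w).ncard := by
  classical
  have h : (subdiv H).neighborSet (inl w) = inr '' (Subtype.val ⁻¹' H.incidenceSet w) := by
    ext (_ | _) <;> simp [incidenceSet]
  rw [h, Set.ncard_image_of_injective _ inr_injective,
    Set.ncard_preimage_of_injective_subset_range Subtype.val_injective
      (by simpa using H.incidenceSet_subset w),
    ← Nat.card_coe_set_eq, ← Nat.card_coe_set_eq, Nat.card_congr (H.incidenceSetEquivNeighborSet w)]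

theorem ncard_neighborSet_subdiv_inr (e : H.edgeSet) :
    ((subdiv H).neighborSet (inr e)).ncard = 2 := by
  obtain ⟨e, he⟩ := e
  induction e using Sym2.ind with
  | _ x y =>
    have h : (subdiv H).neighborSet (inr ⟨s(x, y), he⟩) = {inl x, inl y} := by
      ext (_ | _) <;> simp [eq_comm]
    rw [h, Set.ncard_pair (by simpa using (H.mem_edgeSet.mp he).ne)]

end Subdiv

theorem exists_iso_of_subdiv_iso {H₁ : SimpleGraph W₁} {H₂ : SimpleGraph W₂}
    (φ : subdiv H₁ ≃g subdiv H₂) (hφ : ∀ x, (φ x).isLeft = x.isLeft) :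
    ∃ ψ : H₁ ≃g H₂, ∀ w, φ (inl w) = inl (ψ w) := by
  obtain ⟨g, hg⟩ : ∃ g : W₁ ≃ W₂, ∀ w, φ (inl w) = inl (g w) :=
    φ.toEquiv.exists_apply_inl_eq_inl hφ
  refine ⟨⟨g, fun {a b} => ?_⟩, hg⟩
  rw [adj_iff_exists_subdiv_adj, adj_iff_exists_subdiv_adj, g.injective.ne_iff, ← hg, ← hg]
  exact and_congr_right fun _ => φ.surjective.exists.trans (by simp only [Iso.map_adj_iff])

theorem isLeft_apply_of_subdiv_hom {H₁ : SimpleGraph W₁} {H₂ : SimpleGraph W₂}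
    (hH : (subdiv H₁).Preconnected) (φ : subdiv H₁ →g subdiv H₂) {w : W₁}
    (hw : (φ (inl w)).isLeft) (x : W₁ ⊕ H₁.edgeSet) : (φ x).isLeft = x.isLeft :=
  Coloring.apply_eq_of_preconnected hH ((subdivColoring H₂).comp φ) (subdivColoring H₁) hw x

theorem nonempty_iso_of_augment_iso {G₁ : SimpleGraph V₁} {G₂ : SimpleGraph V₂}
    (ψ : augment G₁ ≃g augment G₂) (hu : ψ (inr false) = inr false) : Nonempty (G₁ ≃g G₂) := by
  classical
  -- `ψ` may send the leaf to an isolated vertex of `G₂`; both have neighbourhood `{u}`.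
  have htwin : ∀ z, (augment G₂).Adj (ψ (inr true)) z ↔ (augment G₂).Adj (inr true) z := fun z => by
    rw [← ψ.apply_symm_apply z, Iso.map_adj_iff, augment_adj_inr_true, augment_adj_inr_true,
      ψ.apply_symm_apply, ψ.symm_apply_eq, hu]
  let ψ' := ψ.trans (Iso.swapOfAdjIff htwin)
  have hu' : ψ' (inr false) = inr false := by
    refine (congrArg _ hu).trans (Equiv.swap_apply_of_ne_of_ne ?_ (by simp))
    rw [← hu, Ne, ψ.apply_eq_iff_eq]
    simp
  have hv' : ψ' (inr true) = inr true := Equiv.swap_apply_left _ _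
  have hside : ∀ x, (ψ' x).isLeft = x.isLeft := by
    rintro (x | _ | _)
    · rcases h : ψ' (inl x) with _ | (_ | _)
      · rfl
      · exact absurd (ψ'.injective (h.trans hu'.symm)) inl_ne_inr
      · exact absurd (ψ'.injective (h.trans hv'.symm)) inl_ne_inr
    · simp [hu']
    · simp [hv']
  obtain ⟨g, -⟩ := Iso.exists_iso_comap_inl (augment_comap_inl G₁) (augment_comap_inl G₂) ψ' hside
  exact ⟨g⟩

theorem eq_inl_inr_false_of_ncard_neighborSet_subdiv_augment [Fintype V] (G : SimpleGraph V)
    (hn : 2 ≤ Fintype.card V) {w : (V ⊕ Bool) ⊕ (augment G).edgeSet}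
    (hw : ((subdiv (augment G)).neighborSet w).ncard = Fintype.card V + 1) :
    w = inl (inr false) := by
  rcases w with (x | _ | _) | e
  · have := ncard_neighborSet_augment_inl_le G x
    rw [ncard_neighborSet_subdiv_inl] at hw
    omega
  · rfl
  · rw [ncard_neighborSet_subdiv_inl, ncard_neighborSet_augment_inr_true] at hw
    omega
  · rw [ncard_neighborSet_subdiv_inr] at hw
    omega

theorem apply_apex_eq_inr_apex [Fintype V₁] [Fintype V₂] {G₁ : SimpleGraph V₁}
    {G₂ : SimpleGraph V₂} (hcard : Fintype.card V₁ = Fintype.card V₂) (hn : 2 ≤ Fintype.card V₁)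
    (f : (subdiv (augment G₁) ⊕g subdiv (augment G₂)) ≃g
      (subdiv (augment G₁) ⊕g subdiv (augment G₂)))
    (hf : f (inl (inl (inr false))) ≠ inl (inl (inr false))) :
    f (inl (inl (inr false))) = inr (inl (inr false)) := by
  have hdeg := f.ncard_neighborSet (inl (inl (inr false)))
  rw [ncard_neighborSet_sum_inl, ncard_neighborSet_subdiv_inl,
    ncard_neighborSet_augment_inr_false] at hdeg
  rcases h : f (inl (inl (inr false))) with w | w <;> rw [h] at hdeg hf
  · rw [ncard_neighborSet_sum_inl] at hdeg
    exact absurd (congrArg inl (eq_inl_inr_false_of_ncard_neighborSet_subdiv_augment G₁ hn hdeg)) hf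
  · rw [ncard_neighborSet_sum_inr, hcard] at hdeg
    rw [eq_inl_inr_false_of_ncard_neighborSet_subdiv_augment G₂ (hcard ▸ hn) hdeg]

end

/-- Let `G₁, G₂` have the same number of vertices, let `Gᵢ' = subdiv (augment Gᵢ)` and
`G' = G₁' ⊕g G₂'`. If `G'` admits an involutive automorphism mapping every edge to a
vertex-disjoint edge, then `G₁` and `G₂` are isomorphic. -/
theorem stmt_16 {V₁ V₂ : Type*} [Fintype V₁] [Fintype V₂]
    (G₁ : SimpleGraph V₁) (G₂ : SimpleGraph V₂)
    (hcard : Fintype.card V₁ = Fintype.card V₂)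
    (f : (subdiv (augment G₁) ⊕g subdiv (augment G₂)) ≃g
         (subdiv (augment G₁) ⊕g subdiv (augment G₂)))
    (hinv : ∀ x, f (f x) = x)
    (hdisj : ∀ a b, (subdiv (augment G₁) ⊕g subdiv (augment G₂)).Adj a b →
      f a ≠ a ∧ f a ≠ b ∧ f b ≠ a ∧ f b ≠ b) :
    Nonempty (G₁ ≃g G₂) := by
  obtain hsmall | hn := le_or_gt (Fintype.card V₁) 1
  · have := Fintype.card_le_one_iff_subsingleton.mp hsmall
    exact ⟨⟨Fintype.equivOfCardEq hcard, fun {a b} => by simp [Subsingleton.elim a b]⟩⟩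
  have hconn₁ := subdiv_preconnected (augment_preconnected G₁)
  have hconn₂ := subdiv_preconnected (augment_preconnected G₂)
  have hfu : f (inl (inl (inr false))) = inr (inl (inr false)) :=
    apply_apex_eq_inr_apex hcard hn f
      (hdisj _ (inl (inr ⟨s(inr false, inr true), by simp⟩)) (by simp)).1
  have hswap : ∀ x, (f x).isRight = x.isLeft :=
    Hom.isRight_apply_eq_isLeft hconn₁ hconn₂ f.toHom (a := inl (inr false)) (b := inl (inr false))
      (by simp [hfu]) (by simp [← hfu, hinv])
  obtain ⟨φ, hφ⟩ := Iso.exists_iso_comap_inl (sum_comap_inl _ _) (sum_comap_inl _ _)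
    (f.trans Iso.sumComm) fun x => (isLeft_swap (f x)).trans (hswap x)
  have hφu : φ (inl (inr false)) = inl (inr false) := by
    simpa [hfu] using (hφ (inl (inr false))).symm
  obtain ⟨ψ, hψ⟩ := exists_iso_of_subdiv_iso φ
    (isLeft_apply_of_subdiv_hom hconn₁ φ.toHom (w := inr false) (by simp [hφu]))
  exact nonempty_iso_of_augment_iso ψ (by simpa [hφu] using (hψ (inr false)).symm)
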